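/- arXiv:2012.06603 — 2 statements merged into one kernel-verified Lean document; each statement's English description precedes it below -/
import Mathlib

section
/- For all d ≥ 1, ε > 0, K > 0 and r₀ = (6ε/((1+ε)K))^{1/3}: (2/Γ(d/2)) (2ε)^{-d/2} ∫_0^{r₀} [exp((1+ε)K r³/(6ε)) - 1] exp(-r²/(2ε)) r^{d-1} dr ≤ (√2 e / 3)(1+ε) ε^{1/2} K · Γ(d/2 + 3/2)/Γ(d/2). -/
open MeasureTheory

/-- Close-range bound in the proof of Theorem 4.1: for
`r₀ = (6ε/((1+ε)K))^{1/3}`,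
`(2/Γ(d/2))(2ε)^{-d/2} ∫_0^{r₀} [exp((1+ε)Kr³/(6ε)) - 1] exp(-r²/(2ε)) r^{d-1} dr
  ≤ (√2 e/3)(1+ε)ε^{1/2}K · Γ(d/2+3/2)/Γ(d/2)`. -/
theorem close_range_explicit_bound {d : ℕ} (hd : 1 ≤ d)
    (ε K : ℝ) (hε : 0 < ε) (hK : 0 < K)
    (r₀ : ℝ) (hr₀ : r₀ = (6 * ε / ((1 + ε) * K)) ^ ((1 : ℝ) / 3)) :
    (2 / Real.Gamma ((d : ℝ) / 2)) * (2 * ε) ^ (-(d : ℝ) / 2) *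
        ∫ r in (0 : ℝ)..r₀,
          (Real.exp ((1 + ε) * K * r ^ 3 / (6 * ε)) - 1) *
            Real.exp (-r ^ 2 / (2 * ε)) * r ^ ((d : ℝ) - 1)
      ≤ (Real.sqrt 2 * Real.exp 1 / 3) * (1 + ε) * ε ^ ((1 : ℝ) / 2) * K *
          (Real.Gamma ((d : ℝ) / 2 + 3 / 2) / Real.Gamma ((d : ℝ) / 2)) := by
  have hε2 : (0 : ℝ) < 2 * ε := by linarith
  have h1ε : (0 : ℝ) < 1 + ε := by linarith
  have hd1 : (1 : ℝ) ≤ (d : ℝ) := by exact_mod_cast hd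
  have hA : (0 : ℝ) < 6 * ε / ((1 + ε) * K) := by positivity
  have hr₀pos : 0 < r₀ := hr₀ ▸ Real.rpow_pos_of_pos hA _
  have hr₀cube : r₀ ^ 3 = 6 * ε / ((1 + ε) * K) := by
    rw [hr₀, ← Real.rpow_natCast ((6 * ε / ((1 + ε) * K)) ^ ((1 : ℝ) / 3)) 3,
      ← Real.rpow_mul hA.le]
    norm_num
  set b : ℝ := 1 / (2 * ε) with hb
  have hbpos : 0 < b := by positivity
  set C : ℝ := Real.exp 1 * ((1 + ε) * K / (6 * ε)) with hC
  have hCpos : 0 < C := by positivity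
  set f : ℝ → ℝ := fun r =>
    (Real.exp ((1 + ε) * K * r ^ 3 / (6 * ε)) - 1) *
      Real.exp (-r ^ 2 / (2 * ε)) * r ^ ((d : ℝ) - 1) with hf
  set g : ℝ → ℝ := fun x => C * (x ^ ((d : ℝ) + 2) * Real.exp (-b * x ^ 2)) with hg
  have hd1' : (0 : ℝ) ≤ (d : ℝ) - 1 := by linarith
  have hcontf : Continuous f := by
    have c1 : Continuous fun r : ℝ => (1 + ε) * K * r ^ 3 / (6 * ε) :=
      (continuous_const.mul (continuous_pow 3)).div_const (6 * ε)
    have c2 : Continuous fun r : ℝ => -r ^ 2 / (2 * ε) :=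
      ((continuous_pow 2).neg).div_const (2 * ε)
    exact (((Real.continuous_exp.comp c1).sub continuous_const).mul
      (Real.continuous_exp.comp c2)).mul (Real.continuous_rpow_const hd1')
  have hcontg : Continuous g := by
    have c3 : Continuous fun x : ℝ => -b * x ^ 2 := continuous_const.mul (continuous_pow 2)
    exact continuous_const.mul
      ((Real.continuous_rpow_const (by linarith)).mul (Real.continuous_exp.comp c3))
  -- pointwise bound on [0, r₀]
  have hpt : ∀ x ∈ Set.Icc (0 : ℝ) r₀, f x ≤ g x := by
    intro x hx
    obtain ⟨hx0, hxr⟩ := hx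
    set t : ℝ := (1 + ε) * K * x ^ 3 / (6 * ε) with ht
    have ht0 : 0 ≤ t := by positivity
    have ht1 : t ≤ 1 := by
      have hx3 : x ^ 3 ≤ r₀ ^ 3 := pow_le_pow_left₀ hx0 hxr 3
      rw [ht, div_le_one (by positivity)]
      calc (1 + ε) * K * x ^ 3 ≤ (1 + ε) * K * r₀ ^ 3 := by
            exact mul_le_mul_of_nonneg_left hx3 (by positivity)
        _ = 6 * ε := by rw [hr₀cube]; field_simp
    have hexp : Real.exp t - 1 ≤ Real.exp 1 * t := by
      have h1 : -t + 1 ≤ Real.exp (-t) := Real.add_one_le_exp (-t)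
      have h2 : Real.exp (-t) * Real.exp t = 1 := by rw [← Real.exp_add]; simp
      have h3 : Real.exp t ≤ Real.exp 1 := Real.exp_le_exp.mpr ht1
      nlinarith [Real.exp_pos t]
    have hxpow : x ^ 3 * x ^ ((d : ℝ) - 1) = x ^ ((d : ℝ) + 2) := by
      rcases eq_or_lt_of_le hx0 with h | h
      · rw [← h]
        rw [Real.zero_rpow (by linarith : (d : ℝ) + 2 ≠ 0)]
        simp
      · rw [← Real.rpow_natCast x 3, ← Real.rpow_add h]
        congr 1
        push_cast
        ring
    have hE : Real.exp (-x ^ 2 / (2 * ε)) = Real.exp (-b * x ^ 2) := by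
      rw [hb]; congr 1; field_simp
    have hP0 : (0 : ℝ) ≤ x ^ ((d : ℝ) - 1) := Real.rpow_nonneg hx0 _
    have step : f x ≤ Real.exp 1 * t * Real.exp (-x ^ 2 / (2 * ε)) * x ^ ((d : ℝ) - 1) := by
      apply mul_le_mul_of_nonneg_right _ hP0
      exact mul_le_mul_of_nonneg_right hexp (Real.exp_pos _).le
    refine step.trans (le_of_eq ?_)
    show Real.exp 1 * t * Real.exp (-x ^ 2 / (2 * ε)) * x ^ ((d : ℝ) - 1)
      = C * (x ^ ((d : ℝ) + 2) * Real.exp (-b * x ^ 2))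
    rw [hE, hC, ht, ← hxpow]
    ring
  have hInt1 : IntervalIntegrable f volume 0 r₀ := hcontf.intervalIntegrable 0 r₀
  have hInt2 : IntervalIntegrable g volume 0 r₀ := hcontg.intervalIntegrable 0 r₀
  have step1 : (∫ r in (0 : ℝ)..r₀, f r) ≤ ∫ r in (0 : ℝ)..r₀, g r :=
    intervalIntegral.integral_mono_on hr₀pos.le hInt1 hInt2 hpt
  -- extend to Ioi 0
  have hgint : IntegrableOn (fun x => x ^ ((d : ℝ) + 2) * Real.exp (-b * x ^ 2)) (Set.Ioi 0) :=
    integrableOn_rpow_mul_exp_neg_mul_sq hbpos (by linarith)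
  have hgint' : IntegrableOn g (Set.Ioi 0) := hgint.const_mul C
  have step2 : (∫ r in (0 : ℝ)..r₀, g r) ≤ ∫ x in Set.Ioi (0 : ℝ), g x := by
    rw [intervalIntegral.integral_of_le hr₀pos.le]
    apply setIntegral_mono_set hgint'
    · filter_upwards [ae_restrict_mem measurableSet_Ioi] with x (hx : (0:ℝ) < x)
      have : (0:ℝ) ≤ x := hx.le
      show (0:ℝ) ≤ C * (x ^ ((d : ℝ) + 2) * Real.exp (-b * x ^ 2))
      positivity
    · exact HasSubset.Subset.eventuallyLE Set.Ioc_subset_Ioi_self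
  -- evaluate the Gaussian moment
  have hmoment : (∫ x in Set.Ioi (0 : ℝ), g x)
      = C * (b ^ (-((d : ℝ) + 2 + 1) / 2) * (1 / 2) * Real.Gamma (((d : ℝ) + 2 + 1) / 2)) := by
    rw [hg, integral_const_mul]
    congr 1
    rw [← integral_rpow_mul_exp_neg_mul_rpow two_pos (by linarith : (-1:ℝ) < (d:ℝ)+2) hbpos]
    refine setIntegral_congr_fun measurableSet_Ioi fun x _ => ?_
    rw [Real.rpow_two]
  -- positivity of the leading coefficient
  have hΓpos : 0 < Real.Gamma ((d : ℝ) / 2) := Real.Gamma_pos_of_pos (by linarith)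
  have hcoef : 0 ≤ 2 / Real.Gamma ((d : ℝ) / 2) * (2 * ε) ^ (-(d : ℝ) / 2) := by positivity
  -- rpow arithmetic
  have hbrw : b ^ (-((d : ℝ) + 2 + 1) / 2) = (2 * ε) ^ (((d : ℝ) + 3) / 2) := by
    rw [hb, one_div, Real.inv_rpow hε2.le, ← Real.rpow_neg hε2.le]
    congr 1
    ring
  have e1 : (2 * ε) ^ (-(d : ℝ) / 2) * (2 * ε) ^ (((d : ℝ) + 3) / 2)
      = Real.sqrt 2 * 2 * (ε * ε ^ ((1 : ℝ) / 2)) := by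
    rw [← Real.rpow_add hε2, show -(d : ℝ) / 2 + ((d : ℝ) + 3) / 2 = 3 / 2 by ring,
      Real.mul_rpow (by norm_num) hε.le,
      show (3 : ℝ) / 2 = 1 / 2 + 1 by ring, Real.rpow_add two_pos, Real.rpow_one,
      ← Real.sqrt_eq_rpow, Real.rpow_add hε, Real.rpow_one]
    ring
  calc 2 / Real.Gamma ((d : ℝ) / 2) * (2 * ε) ^ (-(d : ℝ) / 2) * ∫ r in (0 : ℝ)..r₀, f r
      ≤ 2 / Real.Gamma ((d : ℝ) / 2) * (2 * ε) ^ (-(d : ℝ) / 2) *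
        (C * ((2 * ε) ^ (((d : ℝ) + 3) / 2) * (1 / 2) * Real.Gamma (((d : ℝ) + 2 + 1) / 2))) := by
        rw [← hbrw, ← hmoment]
        exact mul_le_mul_of_nonneg_left (step1.trans step2) hcoef
    _ = (2 * ε) ^ (-(d : ℝ) / 2) * (2 * ε) ^ (((d : ℝ) + 3) / 2) *
        (2 / Real.Gamma ((d : ℝ) / 2) * C * (1 / 2) * Real.Gamma (((d : ℝ) + 2 + 1) / 2)) := by
        ring
    _ = (Real.sqrt 2 * Real.exp 1 / 3) * (1 + ε) * ε ^ ((1 : ℝ) / 2) * K *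
          (Real.Gamma ((d : ℝ) / 2 + 3 / 2) / Real.Gamma ((d : ℝ) / 2)) := by
        rw [e1, hC, show ((d : ℝ) + 2 + 1) / 2 = (d : ℝ) / 2 + 3 / 2 by ring]
        field_simp
        ring
end

section
/- Let G ∈ C¹(ℝ^d, ℝ^d), y ∈ ℝ^d, Φ(x) = (1/2)‖G(x) - y‖², R(x) = (1/2)‖x - m₀‖_{Σ₀}² + c with Σ₀ symmetric positive definite, ε > 0, and suppose x̂ satisfies DΦ(x̂) + εDR(x̂) = 0. Then for all x ∈ ℝ^d, with I(x) := Φ(x) + εR(x) - Φ(x̂) - εR(x̂): I(x) ≥ (1/2)‖G(x) - G(x̂)‖² + (ε/2)‖x - x̂‖_{Σ₀}² - ‖G(x) - G(x̂) - DG(x̂)(x - x̂)‖ · ‖G(x̂) - y‖. -/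
/-!
By stationarity of `xhat`, `I x` is the sum of the first-order Taylor remainders of `Φ` and `ε R`
at `xhat`. For `½‖f‖²` the Taylor remainder is `½‖f x - f a‖² + ⟪f x - f a - f'(x - a), f a⟫`;
for the Gaussian log-prior, `f` is affine and the remainder is exactly `½‖S₀ (x - xhat)‖²`.
Cauchy–Schwarz bounds the cross term of the data misfit.
-/

open scoped RealInnerProductSpace

section HalfNormSq

variable {E F : Type*} [NormedAddCommGroup E] [NormedSpace ℝ E]
  [NormedAddCommGroup F] [InnerProductSpace ℝ F]

theorem HasFDerivAt.half_norm_sq_sub_sub_fderiv {f : E → F} {f' : E →L[ℝ] F} {a : E}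
    (hf : HasFDerivAt f f' a) (x : E) :
    1 / 2 * ‖f x‖ ^ 2 - 1 / 2 * ‖f a‖ ^ 2
        - fderiv ℝ (fun z => 1 / 2 * ‖f z‖ ^ 2) a (x - a)
      = 1 / 2 * ‖f x - f a‖ ^ 2 + ⟪f x - f a - f' (x - a), f a⟫ := by
  rw [(hf.norm_sq.const_mul (1 / 2)).fderiv]
  simp only [smul_apply, ContinuousLinearMap.comp_apply, innerSL_apply_apply,
    smul_eq_mul, nsmul_eq_mul, Nat.cast_ofNat]
  rw [norm_sub_sq_real, inner_sub_left, inner_sub_left, real_inner_self_eq_norm_sq,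
    real_inner_comm (f a) (f' _)]
  ring

theorem ContinuousLinearMap.half_norm_sq_sub_sub_fderiv (L : E →L[ℝ] F) (m : E) (c : ℝ)
    (a x : E) :
    (1 / 2 * ‖L (x - m)‖ ^ 2 + c) - (1 / 2 * ‖L (a - m)‖ ^ 2 + c)
        - fderiv ℝ (fun z => 1 / 2 * ‖L (z - m)‖ ^ 2 + c) a (x - a)
      = 1 / 2 * ‖L (x - a)‖ ^ 2 := by
  have hL : HasFDerivAt (fun z => L (z - m)) L a :=
    L.hasFDerivAt.comp a ((hasFDerivAt_id a).sub_const m)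
  have hrem := hL.half_norm_sq_sub_sub_fderiv x
  rw [fderiv_add_const]
  simp only [← map_sub, sub_sub_sub_cancel_right, sub_self, inner_zero_left,
    add_zero] at hrem
  linarith

end HalfNormSq

theorem It_lower_bound_general {d : ℕ}
    (G : EuclideanSpace ℝ (Fin d) → EuclideanSpace ℝ (Fin d)) (hG : ContDiff ℝ 1 G)
    (y m₀ : EuclideanSpace ℝ (Fin d)) (c : ℝ)
    (S₀ : Matrix (Fin d) (Fin d) ℝ)
    (ε : ℝ)
    (Φ R : EuclideanSpace ℝ (Fin d) → ℝ)
    (hΦ : ∀ x, Φ x = (1 / 2) * ‖G x - y‖ ^ 2)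
    (hR : ∀ x, R x = (1 / 2) * ‖Matrix.toEuclideanLin S₀ (x - m₀)‖ ^ 2 + c)
    (xhat : EuclideanSpace ℝ (Fin d))
    (hstat : fderiv ℝ Φ xhat + ε • fderiv ℝ R xhat = 0)
    (I : EuclideanSpace ℝ (Fin d) → ℝ)
    (hI : ∀ x, I x = Φ x + ε * R x - Φ xhat - ε * R xhat) :
    ∀ x : EuclideanSpace ℝ (Fin d),
      (1 / 2) * ‖G x - G xhat‖ ^ 2
        + (ε / 2) * ‖Matrix.toEuclideanLin S₀ (x - xhat)‖ ^ 2
        - ‖G x - G xhat - fderiv ℝ G xhat (x - xhat)‖ * ‖G xhat - y‖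
      ≤ I x := by
  intro x
  have hstat_x : fderiv ℝ Φ xhat (x - xhat) + ε * fderiv ℝ R xhat (x - xhat) = 0 := by
    simpa using congr($hstat (x - xhat))
  replace hΦ : Φ = fun z => 1 / 2 * ‖G z - y‖ ^ 2 := funext hΦ
  replace hR : R = fun z => 1 / 2 * ‖Matrix.toEuclideanCLM (𝕜 := ℝ) S₀ (z - m₀)‖ ^ 2 + c :=
    funext hR
  subst hΦ hR
  have hG' : HasFDerivAt G (fderiv ℝ G xhat) xhat :=
    (hG.differentiable one_ne_zero xhat).hasFDerivAt
  have hΦrem := (hG'.sub_const y).half_norm_sq_sub_sub_fderiv x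
  have hRrem := (Matrix.toEuclideanCLM (𝕜 := ℝ) S₀).half_norm_sq_sub_sub_fderiv m₀ c xhat x
  simp only [sub_sub_sub_cancel_right] at hΦrem
  have hcs := real_inner_le_norm (-(G x - G xhat - fderiv ℝ G xhat (x - xhat))) (G xhat - y)
  rw [inner_neg_left, norm_neg] at hcs
  rw [hI]
  change _ + ε / 2 * ‖Matrix.toEuclideanCLM (𝕜 := ℝ) S₀ (x - xhat)‖ ^ 2 - _ ≤ _
  linear_combination hcs - hΦrem - ε * hRrem - hstat_x

/-- Lemma 5.3: for `Φ(x) = (1/2)‖G(x) - y‖²`, Gaussian log-prior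
`R(x) = (1/2)‖x - m₀‖_{Σ₀}² + c` (with `S₀ = Σ₀^{-1/2}`), and a stationary point
`xhat` of `Φ + εR`, the function `I(x) = Φ(x) + εR(x) - Φ(xhat) - εR(xhat)` satisfies
`I(x) ≥ (1/2)‖G(x) - G(xhat)‖² + (ε/2)‖x - xhat‖_{Σ₀}²
  - ‖G(x) - G(xhat) - DG(xhat)(x - xhat)‖·‖G(xhat) - y‖`. -/
theorem It_lower_bound {d : ℕ}
    (G : EuclideanSpace ℝ (Fin d) → EuclideanSpace ℝ (Fin d)) (hG : ContDiff ℝ 1 G)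
    (y m₀ : EuclideanSpace ℝ (Fin d)) (c : ℝ)
    (Cov₀ S₀ : Matrix (Fin d) (Fin d) ℝ)
    (hCov₀ : Cov₀.PosDef) (hS₀ : S₀.PosDef) (hSS₀ : S₀ * S₀ = Cov₀⁻¹)
    (ε : ℝ) (hε : 0 < ε)
    (Φ R : EuclideanSpace ℝ (Fin d) → ℝ)
    (hΦ : ∀ x, Φ x = (1 / 2) * ‖G x - y‖ ^ 2)
    (hR : ∀ x, R x = (1 / 2) * ‖Matrix.toEuclideanLin S₀ (x - m₀)‖ ^ 2 + c)
    (xhat : EuclideanSpace ℝ (Fin d))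
    (hstat : fderiv ℝ Φ xhat + ε • fderiv ℝ R xhat = 0)
    (I : EuclideanSpace ℝ (Fin d) → ℝ)
    (hI : ∀ x, I x = Φ x + ε * R x - Φ xhat - ε * R xhat) :
    ∀ x : EuclideanSpace ℝ (Fin d),
      (1 / 2) * ‖G x - G xhat‖ ^ 2
        + (ε / 2) * ‖Matrix.toEuclideanLin S₀ (x - xhat)‖ ^ 2
        - ‖G x - G xhat - fderiv ℝ G xhat (x - xhat)‖ * ‖G xhat - y‖
      ≤ I x :=
  It_lower_bound_general G hG y m₀ c S₀ ε Φ R hΦ hR xhat hstat I hI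
end
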